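/- arXiv:1610.00268 — 2 statements merged into one kernel-verified Lean document; each statement's English description precedes it below -/
import Mathlib

section
/- Let κ be a positive definite kernel on a locally compact space. Suppose that for every measure λ of finite energy with compact support, the map μ ↦ κ(λ, μ) is vaguely continuous on the set E° = {μ ≥ 0 : κ(μ,μ) ≤ 1}. Then for every positive measure λ of finite energy (not necessarily with compact support), the map μ ↦ κ(λ, μ) is vaguely continuous on E°. -/
open MeasureTheory ENNReal Filter Topology

/-- The mutual energy `κ(μ,ν) = ∬ κ(x,y) dμ(x) dν(y)` in `[0,∞]`. -/
noncomputable def mutualEnergy {X : Type*} [MeasurableSpace X] (κ : X → X → ℝ≥0∞)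
    (μ ν : Measure X) : ℝ≥0∞ :=
  ∫⁻ x, ∫⁻ y, κ x y ∂ν ∂μ

/-- The mutual energy as a real number (for measures of finite energy). -/
noncomputable def mutualEnergyR {X : Type*} [MeasurableSpace X] (κ : X → X → ℝ≥0∞)
    (μ ν : Measure X) : ℝ :=
  (mutualEnergy κ μ ν).toReal

/-- Vague convergence of a sequence of measures: convergence of integrals of all continuous
compactly supported functions. -/
def VagueTendsto {X : Type*} [TopologicalSpace X] [MeasurableSpace X]
    (μ : ℕ → Measure X) (μlim : Measure X) : Prop :=
  ∀ f : X → ℝ, Continuous f → HasCompactSupport f →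
    Tendsto (fun i => ∫ x, f x ∂(μ i)) atTop (𝓝 (∫ x, f x ∂μlim))

/-- Let `κ` be a positive definite kernel on a (σ-compact) locally compact space.
Suppose that for every measure `λ'` of finite energy with compact support, the map
`μ ↦ κ(λ', μ)` is vaguely continuous on `E° = {μ ≥ 0 : κ(μ,μ) ≤ 1}`. Then for every positive
measure `λ` of finite energy (not necessarily of compact support), the map `μ ↦ κ(λ, μ)` is
vaguely continuous on `E°`. (One may use that restrictions to an exhausting sequence of
compacts converge strongly, and the Cauchy–Schwarz inequality; these facts are recorded as
hypotheses `hrestrict` and `hCS`.) -/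
theorem vague_continuity_extends {X : Type*} [TopologicalSpace X] [T2Space X]
    [LocallyCompactSpace X] [SigmaCompactSpace X] [MeasurableSpace X] [BorelSpace X]
    (κ : X → X → ℝ≥0∞)
    (hlsc : LowerSemicontinuous (fun p : X × X => κ p.1 p.2))
    (hsym : ∀ x y, κ x y = κ y x)
    (hdiag : ∀ x, 0 < κ x x)
    (hpd : ∀ μ ν : Measure X, mutualEnergy κ μ μ ≠ ∞ → mutualEnergy κ ν ν ≠ ∞ →
      2 * mutualEnergy κ μ ν ≤ mutualEnergy κ μ μ + mutualEnergy κ ν ν)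
    -- Cauchy–Schwarz: |κ(σ, τ − τ')| ≤ ‖σ‖ ‖τ − τ'‖ for positive measures of finite energy
    (hCS : ∀ σ τ τ' : Measure X, mutualEnergy κ σ σ ≠ ∞ → mutualEnergy κ τ τ ≠ ∞ →
      mutualEnergy κ τ' τ' ≠ ∞ →
      |mutualEnergyR κ σ τ - mutualEnergyR κ σ τ'|
        ≤ Real.sqrt (mutualEnergyR κ σ σ)
          * Real.sqrt (mutualEnergyR κ τ τ - 2 * mutualEnergyR κ τ τ'
              + mutualEnergyR κ τ' τ'))
    -- strong convergence of restrictions to an exhausting sequence of compacts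
    (hrestrict : ∀ lam : Measure X, mutualEnergy κ lam lam ≠ ∞ →
      ∀ K : ℕ → Set X, (∀ i, IsCompact (K i)) → Monotone K → (⋃ i, K i = Set.univ) →
        Tendsto (fun i => mutualEnergyR κ lam lam
            - 2 * mutualEnergyR κ lam (lam.restrict (K i))
            + mutualEnergyR κ (lam.restrict (K i)) (lam.restrict (K i))) atTop (𝓝 0))
    -- hypothesis: vague continuity on E° of μ ↦ κ(λ', μ) for λ' of finite energy and
    -- compact support
    (hcont : ∀ lam' : Measure X, mutualEnergy κ lam' lam' ≠ ∞ →
      (∃ K : Set X, IsCompact K ∧ lam' Kᶜ = 0) →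
      ∀ (μ : ℕ → Measure X) (μlim : Measure X),
        (∀ i, mutualEnergy κ (μ i) (μ i) ≤ 1) → mutualEnergy κ μlim μlim ≤ 1 →
        VagueTendsto μ μlim →
        Tendsto (fun i => mutualEnergyR κ lam' (μ i)) atTop
          (𝓝 (mutualEnergyR κ lam' μlim))) :
    ∀ lam : Measure X, mutualEnergy κ lam lam ≠ ∞ →
      ∀ (μ : ℕ → Measure X) (μlim : Measure X),
        (∀ i, mutualEnergy κ (μ i) (μ i) ≤ 1) → mutualEnergy κ μlim μlim ≤ 1 →
        VagueTendsto μ μlim →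
        Tendsto (fun i => mutualEnergyR κ lam (μ i)) atTop
          (𝓝 (mutualEnergyR κ lam μlim)) := by
  intro lam hlam μ μlim hμ hμlim hvague
  -- exhausting sequence of compacts
  set K : CompactExhaustion X := CompactExhaustion.choice X with hKdef
  have hKm : ∀ j, MeasurableSet (K j) := fun j => (K.isCompact j).isClosed.measurableSet
  set lamr : ℕ → Measure X := fun j => lam.restrict (K j) with hlamrdef
  set lamc : ℕ → Measure X := fun j => lam.restrict (K j)ᶜ with hlamcdef
  have hsplit : ∀ j, lamr j + lamc j = lam := fun j =>
    Measure.restrict_add_restrict_compl (hKm j)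
  -- monotonicity of mutual energy
  have hmono : ∀ {σ σ' τ τ' : Measure X}, σ ≤ σ' → τ ≤ τ' →
      mutualEnergy κ σ τ ≤ mutualEnergy κ σ' τ' := by
    intro σ σ' τ τ' h1 h2
    exact lintegral_mono' h1 (fun x => lintegral_mono' h2 le_rfl)
  have haddl : ∀ (σ σ' τ : Measure X),
      mutualEnergy κ (σ + σ') τ = mutualEnergy κ σ τ + mutualEnergy κ σ' τ := by
    intro σ σ' τ
    exact lintegral_add_measure _ _ _
  have hzeroR : ∀ σ : Measure X, mutualEnergyR κ σ 0 = 0 := by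
    intro σ; simp [mutualEnergyR, mutualEnergy]
  have hzeroE : mutualEnergy κ (0 : Measure X) 0 ≠ ∞ := by
    simp [mutualEnergy]
  -- finiteness
  have hbne : ∀ j, mutualEnergy κ (lamr j) (lamr j) ≠ ∞ := fun j =>
    ne_top_of_le_ne_top hlam (hmono Measure.restrict_le_self Measure.restrict_le_self)
  have he'ne : ∀ j, mutualEnergy κ (lamc j) (lamc j) ≠ ∞ := fun j =>
    ne_top_of_le_ne_top hlam (hmono Measure.restrict_le_self Measure.restrict_le_self)
  have hcne : ∀ j, mutualEnergy κ lam (lamr j) ≠ ∞ := fun j =>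
    ne_top_of_le_ne_top hlam (hmono le_rfl Measure.restrict_le_self)
  -- real abbreviations
  set aR : ℝ := mutualEnergyR κ lam lam with haR
  set bR : ℕ → ℝ := fun j => mutualEnergyR κ (lamr j) (lamr j) with hbR
  set cR : ℕ → ℝ := fun j => mutualEnergyR κ lam (lamr j) with hcR
  set e'R : ℕ → ℝ := fun j => mutualEnergyR κ (lamc j) (lamc j) with he'R
  set d : ℕ → ℝ := fun j => aR - bR j with hd
  have haR0 : 0 ≤ aR := ENNReal.toReal_nonneg
  have hbR0 : ∀ j, 0 ≤ bR j := fun j => ENNReal.toReal_nonneg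
  have hcR0 : ∀ j, 0 ≤ cR j := fun j => ENNReal.toReal_nonneg
  have he'R0 : ∀ j, 0 ≤ e'R j := fun j => ENNReal.toReal_nonneg
  -- b_j + e'_j ≤ a
  have hsum : ∀ j, bR j + e'R j ≤ aR := by
    intro j
    have h1 : mutualEnergy κ (lamr j) (lamr j) + mutualEnergy κ (lamc j) (lamc j)
        ≤ mutualEnergy κ lam lam := by
      calc mutualEnergy κ (lamr j) (lamr j) + mutualEnergy κ (lamc j) (lamc j)
          ≤ mutualEnergy κ (lamr j) lam + mutualEnergy κ (lamc j) lam :=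
            add_le_add (hmono le_rfl Measure.restrict_le_self)
              (hmono le_rfl Measure.restrict_le_self)
        _ = mutualEnergy κ (lamr j + lamc j) lam := (haddl _ _ _).symm
        _ = mutualEnergy κ lam lam := by rw [hsplit j]
    have h2 := ENNReal.toReal_mono hlam h1
    rwa [ENNReal.toReal_add (hbne j) (he'ne j)] at h2
  have he'le : ∀ j, e'R j ≤ d j := fun j => by
    have := hsum j; simp only [hd]; linarith
  have hdled : ∀ j, 0 ≤ d j := fun j => le_trans (he'R0 j) (he'le j)
  -- b_j ≤ a
  have hbne' : ∀ j, bR j ≤ aR := by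
    intro j; have := hsum j; linarith [he'R0 j]
  -- Cauchy–Schwarz : c_j ≤ √a √b_j
  have hcs1 : ∀ j, cR j ≤ Real.sqrt aR * Real.sqrt (bR j) := by
    intro j
    have h := hCS lam (lamr j) 0 hlam (hbne j) hzeroE
    rw [hzeroR lam, hzeroR (lamr j)] at h
    have h2 : |cR j - 0| ≤ Real.sqrt aR * Real.sqrt (bR j - 2 * 0 + mutualEnergyR κ 0 0) := h
    have h0 : mutualEnergyR κ (0 : Measure X) 0 = 0 := hzeroR 0
    rw [h0] at h2
    calc cR j = |cR j - 0| := by rw [sub_zero, abs_of_nonneg (hcR0 j)]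
      _ ≤ Real.sqrt aR * Real.sqrt (bR j - 2 * 0 + 0) := h2
      _ = Real.sqrt aR * Real.sqrt (bR j) := by norm_num
  -- the restriction error sequence
  set eseq : ℕ → ℝ := fun j => aR - 2 * cR j + bR j with heseq
  have heseqto : Tendsto eseq atTop (𝓝 0) := by
    have := hrestrict lam hlam (fun j => K j) (fun j => K.isCompact j)
      (fun m n h => K.subset h) K.iUnion_eq
    exact this
  have heseq_ge : ∀ j, (Real.sqrt aR - Real.sqrt (bR j)) ^ 2 ≤ eseq j := by
    intro j
    have h1 : Real.sqrt aR ^ 2 = aR := Real.sq_sqrt haR0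
    have h2 : Real.sqrt (bR j) ^ 2 = bR j := Real.sq_sqrt (hbR0 j)
    have := hcs1 j
    simp only [heseq]
    nlinarith
  have heseq0 : ∀ j, 0 ≤ eseq j := fun j => le_trans (sq_nonneg _) (heseq_ge j)
  -- d_j ≤ 2 √a √(eseq j)
  have hdle : ∀ j, d j ≤ 2 * Real.sqrt aR * Real.sqrt (eseq j) := by
    intro j
    have h1 : Real.sqrt aR - Real.sqrt (bR j) ≤ Real.sqrt (eseq j) := by
      have := Real.sqrt_le_sqrt (heseq_ge j)
      rwa [Real.sqrt_sq_eq_abs, abs_of_nonneg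
        (by linarith [Real.sqrt_le_sqrt (hbne' j)] : (0:ℝ) ≤ Real.sqrt aR - Real.sqrt (bR j))]
        at this
    have ha : Real.sqrt aR ^ 2 = aR := Real.sq_sqrt haR0
    have hb : Real.sqrt (bR j) ^ 2 = bR j := Real.sq_sqrt (hbR0 j)
    have hble : Real.sqrt (bR j) ≤ Real.sqrt aR := Real.sqrt_le_sqrt (hbne' j)
    have hb0 : 0 ≤ Real.sqrt (bR j) := Real.sqrt_nonneg _
    simp only [hd]
    nlinarith
  -- d_j → 0
  have hdto : Tendsto d atTop (𝓝 0) := by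
    have hsq : Tendsto (fun j => Real.sqrt (eseq j)) atTop (𝓝 0) := by
      have := (Real.continuous_sqrt.tendsto 0).comp heseqto
      simpa [Function.comp_def] using this
    have h2 : Tendsto (fun j => 2 * Real.sqrt aR * Real.sqrt (eseq j)) atTop (𝓝 0) := by
      have := hsq.const_mul (2 * Real.sqrt aR)
      simpa using this
    exact squeeze_zero hdled hdle h2
  -- finiteness of mixed energies with measures in E°
  have hfin : ∀ ν : Measure X, mutualEnergy κ ν ν ≤ 1 → mutualEnergy κ lam ν ≠ ∞ := by
    intro ν hν h
    have hνne : mutualEnergy κ ν ν ≠ ∞ := ne_top_of_le_ne_top ENNReal.one_ne_top hν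
    have hb := hpd lam ν hlam hνne
    rw [h, ENNReal.mul_top (by norm_num)] at hb
    exact (ENNReal.add_ne_top.2 ⟨hlam, hνne⟩) (top_le_iff.1 hb)
  -- key approximation bound
  have key : ∀ j, ∀ ν : Measure X, mutualEnergy κ ν ν ≤ 1 →
      |mutualEnergyR κ lam ν - mutualEnergyR κ (lamr j) ν| ≤ Real.sqrt (d j) := by
    intro j ν hν
    have hνne : mutualEnergy κ ν ν ≠ ∞ := ne_top_of_le_ne_top ENNReal.one_ne_top hν
    have hlamν : mutualEnergy κ lam ν ≠ ∞ := hfin ν hν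
    have hrν : mutualEnergy κ (lamr j) ν ≠ ∞ :=
      ne_top_of_le_ne_top hlamν (hmono Measure.restrict_le_self le_rfl)
    have hcν : mutualEnergy κ (lamc j) ν ≠ ∞ :=
      ne_top_of_le_ne_top hlamν (hmono Measure.restrict_le_self le_rfl)
    -- decomposition
    have hdec : mutualEnergy κ lam ν
        = mutualEnergy κ (lamr j) ν + mutualEnergy κ (lamc j) ν := by
      conv_lhs => rw [← hsplit j]
      exact haddl _ _ _
    have hdecR : mutualEnergyR κ lam ν
        = mutualEnergyR κ (lamr j) ν + mutualEnergyR κ (lamc j) ν := by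
      simp only [mutualEnergyR]
      rw [hdec, ENNReal.toReal_add hrν hcν]
    -- Cauchy–Schwarz for the tail
    have hcs := hCS (lamc j) ν 0 (he'ne j) hνne hzeroE
    rw [hzeroR (lamc j), hzeroR ν] at hcs
    have h0 : mutualEnergyR κ (0 : Measure X) 0 = 0 := hzeroR 0
    rw [h0] at hcs
    have htail : mutualEnergyR κ (lamc j) ν
        ≤ Real.sqrt (e'R j) * Real.sqrt (mutualEnergyR κ ν ν) := by
      calc mutualEnergyR κ (lamc j) ν = |mutualEnergyR κ (lamc j) ν - 0| := by
            rw [sub_zero, abs_of_nonneg (show (0:ℝ) ≤ mutualEnergyR κ (lamc j) ν from ENNReal.toReal_nonneg)]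
        _ ≤ Real.sqrt (e'R j) * Real.sqrt (mutualEnergyR κ ν ν - 2 * 0 + 0) := hcs
        _ = Real.sqrt (e'R j) * Real.sqrt (mutualEnergyR κ ν ν) := by norm_num
    have hν1 : mutualEnergyR κ ν ν ≤ 1 := by
      have := ENNReal.toReal_mono ENNReal.one_ne_top hν
      simpa [mutualEnergyR] using this
    have hνsqrt : Real.sqrt (mutualEnergyR κ ν ν) ≤ 1 := by
      rw [show (1:ℝ) = Real.sqrt 1 by rw [Real.sqrt_one]]
      exact Real.sqrt_le_sqrt hν1
    have htail2 : mutualEnergyR κ (lamc j) ν ≤ Real.sqrt (d j) := by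
      calc mutualEnergyR κ (lamc j) ν
          ≤ Real.sqrt (e'R j) * Real.sqrt (mutualEnergyR κ ν ν) := htail
        _ ≤ Real.sqrt (e'R j) * 1 :=
            mul_le_mul_of_nonneg_left hνsqrt (Real.sqrt_nonneg _)
        _ = Real.sqrt (e'R j) := mul_one _
        _ ≤ Real.sqrt (d j) := Real.sqrt_le_sqrt (he'le j)
    rw [hdecR]
    rw [show mutualEnergyR κ (lamr j) ν + mutualEnergyR κ (lamc j) ν
        - mutualEnergyR κ (lamr j) ν = mutualEnergyR κ (lamc j) ν by ring]
    rw [abs_of_nonneg (show (0:ℝ) ≤ mutualEnergyR κ (lamc j) ν from ENNReal.toReal_nonneg)]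
    exact htail2
  -- final ε/3 argument
  rw [Metric.tendsto_atTop]
  intro ε hε
  have hsd : Tendsto (fun j => Real.sqrt (d j)) atTop (𝓝 0) := by
    have := (Real.continuous_sqrt.tendsto 0).comp hdto
    simpa [Function.comp_def] using this
  obtain ⟨j, hj⟩ := (hsd.eventually (gt_mem_nhds (by linarith : (0:ℝ) < ε/3))).exists
  have hsupp : ∃ Kc : Set X, IsCompact Kc ∧ (lamr j) Kcᶜ = 0 :=
    ⟨K j, K.isCompact j, by
      rw [hlamrdef]
      simp only
      rw [Measure.restrict_apply (hKm j).compl]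
      simp⟩
  have h2 := hcont (lamr j) (hbne j) hsupp μ μlim hμ hμlim hvague
  rw [Metric.tendsto_atTop] at h2
  obtain ⟨N, hN⟩ := h2 (ε/3) (by linarith)
  refine ⟨N, fun n hn => ?_⟩
  have k1 := key j (μ n) (hμ n)
  have k2 := key j μlim hμlim
  have k3 := hN n hn
  rw [Real.dist_eq] at k3 ⊢
  have tri1 : |mutualEnergyR κ lam (μ n) - mutualEnergyR κ lam μlim|
      ≤ |mutualEnergyR κ lam (μ n) - mutualEnergyR κ (lamr j) (μ n)|
        + |mutualEnergyR κ (lamr j) (μ n) - mutualEnergyR κ (lamr j) μlim|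
        + |mutualEnergyR κ (lamr j) μlim - mutualEnergyR κ lam μlim| := by
    have a1 := abs_sub_le (mutualEnergyR κ lam (μ n)) (mutualEnergyR κ (lamr j) (μ n))
      (mutualEnergyR κ lam μlim)
    have a2 := abs_sub_le (mutualEnergyR κ (lamr j) (μ n)) (mutualEnergyR κ (lamr j) μlim)
      (mutualEnergyR κ lam μlim)
    linarith
  have k2' : |mutualEnergyR κ (lamr j) μlim - mutualEnergyR κ lam μlim| ≤ Real.sqrt (d j) := by
    rw [abs_sub_comm]; exact k2
  linarith
end

section
/- Let μ, ν be positive Radon measures on ℝⁿ (n ≥ 3, 0 < α < n) with κ_α μ ≥ κ_α ν everywhere on ℝⁿ. Suppose there exists an increasing sequence of positive measures γ_k whose potentials κ_α γ_k increase pointwise to the constant function 1 on ℝⁿ. Then μ(ℝⁿ) ≥ ν(ℝⁿ). -/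
open MeasureTheory ENNReal Filter Topology

/-- The α-Riesz potential `κ_α μ(x) = ∫ |x−y|^{α−n} dμ(y)` in `[0,∞]`. -/
noncomputable def rieszPotential (n : ℕ) (α : ℝ) (μ : Measure (EuclideanSpace ℝ (Fin n)))
    (x : EuclideanSpace ℝ (Fin n)) : ℝ≥0∞ :=
  ∫⁻ y, ENNReal.ofReal ‖x - y‖ ^ (α - (n : ℝ)) ∂μ

variable {n : ℕ} {α : ℝ}

lemma kernel_measurable :
    Measurable (fun p : EuclideanSpace ℝ (Fin n) × EuclideanSpace ℝ (Fin n) =>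
      ENNReal.ofReal ‖p.1 - p.2‖ ^ (α - (n : ℝ))) := by
  have : Measurable (fun p : EuclideanSpace ℝ (Fin n) × EuclideanSpace ℝ (Fin n) =>
      ENNReal.ofReal ‖p.1 - p.2‖) := (measurable_fst.sub measurable_snd).norm.ennreal_ofReal
  exact this.pow_const _

/-- antitone kernel bound -/
lemma kernel_ge (hαn : α < n) {x y : EuclideanSpace ℝ (Fin n)} {R : ℝ}
    (hy : y ∈ Metric.closedBall x R) :
    ENNReal.ofReal R ^ (α - (n : ℝ)) ≤ ENNReal.ofReal ‖x - y‖ ^ (α - (n : ℝ)) := by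
  have hd : ‖x - y‖ ≤ R := by
    rw [Metric.mem_closedBall, dist_comm] at hy
    simpa [dist_eq_norm] using hy
  have h1 : ENNReal.ofReal ‖x - y‖ ≤ ENNReal.ofReal R := ENNReal.ofReal_le_ofReal hd
  have hneg : α - (n : ℝ) = -((n : ℝ) - α) := by ring
  rw [hneg, ENNReal.rpow_neg, ENNReal.rpow_neg]
  exact ENNReal.inv_le_inv.mpr (ENNReal.rpow_le_rpow h1 (by linarith))

lemma ball_le_pot (hαn : α < n) (γ : Measure (EuclideanSpace ℝ (Fin n)))
    (x : EuclideanSpace ℝ (Fin n)) (R : ℝ) :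
    ENNReal.ofReal R ^ (α - (n : ℝ)) * γ (Metric.closedBall x R) ≤ rieszPotential n α γ x := by
  calc ENNReal.ofReal R ^ (α - (n : ℝ)) * γ (Metric.closedBall x R)
      = ∫⁻ _ in Metric.closedBall x R, ENNReal.ofReal R ^ (α - (n : ℝ)) ∂γ := by
        rw [setLIntegral_const]
    _ ≤ ∫⁻ y in Metric.closedBall x R, ENNReal.ofReal ‖x - y‖ ^ (α - (n : ℝ)) ∂γ :=
        setLIntegral_mono' measurableSet_closedBall fun y hy => kernel_ge hαn hy
    _ ≤ rieszPotential n α γ x := setLIntegral_le_lintegral _ _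

lemma finite_cb (hαn : α < n) {γ : Measure (EuclideanSpace ℝ (Fin n))}
    {x : EuclideanSpace ℝ (Fin n)} (h : rieszPotential n α γ x < ∞) {R : ℝ} (hR : 0 < R) :
    γ (Metric.closedBall x R) < ∞ := by
  have hb := ball_le_pot hαn γ x R
  have hc0 : (ENNReal.ofReal R) ^ (α - (n : ℝ)) ≠ 0 := by
    simp [ENNReal.rpow_eq_zero_iff, ENNReal.ofReal_eq_zero, not_le, hR, ENNReal.ofReal_ne_top]
  have hct : (ENNReal.ofReal R) ^ (α - (n : ℝ)) ≠ ∞ := by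
    simp [ENNReal.rpow_eq_top_iff, ENNReal.ofReal_eq_zero, not_le, hR, ENNReal.ofReal_ne_top]
  calc γ (Metric.closedBall x R)
      ≤ rieszPotential n α γ x / ENNReal.ofReal R ^ (α - (n : ℝ)) := by
        rw [ENNReal.le_div_iff_mul_le (Or.inl hc0) (Or.inl hct), mul_comm]; exact hb
    _ < ∞ := ENNReal.div_lt_top h.ne hc0

lemma sigmaFinite_of_pot_lt_top (hαn : α < n) {γ : Measure (EuclideanSpace ℝ (Fin n))}
    {x : EuclideanSpace ℝ (Fin n)} (h : rieszPotential n α γ x < ∞) : SigmaFinite γ := by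
  refine ⟨⟨⟨fun k => Metric.closedBall x (k + 1), fun _ => trivial,
    fun k => finite_cb hαn h (by positivity), ?_⟩⟩⟩
  apply Set.eq_univ_of_univ_subset
  rw [← Metric.iUnion_closedBall_nat x]
  exact Set.iUnion_mono fun k => Metric.closedBall_subset_closedBall (by push_cast; linarith)

/-- Let `μ, ν` be positive Radon measures on `ℝⁿ` (`n ≥ 3`, `0 < α < n`) with
`κ_α μ ≥ κ_α ν` everywhere on `ℝⁿ`. Suppose there exists an increasing sequence of positive
measures `γ_k` whose potentials `κ_α γ_k` increase pointwise to the constant function `1`.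
Then `μ(ℝⁿ) ≥ ν(ℝⁿ)`. -/
theorem mass_positivity (n : ℕ) (hn : 3 ≤ n) (α : ℝ) (hα : 0 < α) (hαn : α < n)
    (μ ν : Measure (EuclideanSpace ℝ (Fin n)))
    (hpot : ∀ x, rieszPotential n α ν x ≤ rieszPotential n α μ x)
    (γ : ℕ → Measure (EuclideanSpace ℝ (Fin n)))
    (hγmono : Monotone γ)
    (hγpot : ∀ x, Monotone (fun k => rieszPotential n α (γ k) x))
    (hγlim : ∀ x, Tendsto (fun k => rieszPotential n α (γ k) x) atTop (𝓝 1)) :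
    ν Set.univ ≤ μ Set.univ := by
  by_cases hμtop : μ Set.univ = ∞
  · rw [hμtop]; exact le_top
  haveI hμfin : IsFiniteMeasure μ := ⟨Ne.lt_top hμtop⟩
  -- potentials of γ k are bounded by 1
  have hle1 : ∀ k x, rieszPotential n α (γ k) x ≤ 1 := fun k x =>
    (hγpot x).ge_of_tendsto (hγlim x) k
  -- each γ k is sigma-finite
  have hσγ : ∀ k, SigmaFinite (γ k) := fun k =>
    sigmaFinite_of_pot_lt_top hαn (lt_of_le_of_lt (hle1 k 0) one_lt_top)
  -- the swap identity
  have swap : ∀ (ρ τ : Measure (EuclideanSpace ℝ (Fin n))), SFinite ρ → SFinite τ →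
      ∫⁻ x, rieszPotential n α τ x ∂ρ = ∫⁻ y, rieszPotential n α ρ y ∂τ := by
    intro ρ τ hρ hτ
    haveI := hρ; haveI := hτ
    have h := lintegral_lintegral_swap (μ := ρ) (ν := τ)
      (f := fun x y => ENNReal.ofReal ‖x - y‖ ^ (α - (n : ℝ)))
      (kernel_measurable.aemeasurable)
    rw [show (∫⁻ x, rieszPotential n α τ x ∂ρ) =
      ∫⁻ x, ∫⁻ y, ENNReal.ofReal ‖x - y‖ ^ (α - (n : ℝ)) ∂τ ∂ρ from rfl, h]
    refine lintegral_congr fun y => lintegral_congr fun x => ?_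
    rw [norm_sub_rev]
  -- pick k₀ with γ k₀ ≠ 0
  obtain ⟨k₀, hk₀⟩ : ∃ k, rieszPotential n α (γ k) 0 ≠ 0 := by
    by_contra h
    push_neg at h
    have : Tendsto (fun _ : ℕ => (0 : ℝ≥0∞)) atTop (𝓝 1) := by
      simpa [h] using hγlim 0
    exact one_ne_zero (tendsto_nhds_unique tendsto_const_nhds this).symm
  have hγne : γ k₀ ≠ 0 := by
    intro h
    exact hk₀ (by simp [rieszPotential, h])
  -- the potential of μ is finite at some point
  haveI := hσγ k₀
  have hμpot_int : ∫⁻ x, rieszPotential n α μ x ∂(γ k₀) < ∞ := by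
    rw [swap (γ k₀) μ inferInstance inferInstance]
    calc ∫⁻ y, rieszPotential n α (γ k₀) y ∂μ ≤ ∫⁻ _, 1 ∂μ :=
          lintegral_mono fun y => hle1 k₀ y
      _ = μ Set.univ := lintegral_one
      _ < ∞ := Ne.lt_top hμtop
  have hμmeas : Measurable (rieszPotential n α μ) :=
    Measurable.lintegral_prod_right' kernel_measurable
  have hae : ∀ᵐ x ∂(γ k₀), rieszPotential n α μ x < ∞ := ae_lt_top hμmeas hμpot_int.ne
  haveI : (ae (γ k₀)).NeBot := MeasureTheory.ae_neBot.mpr hγne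
  obtain ⟨x₀, hx₀⟩ := hae.exists
  -- ν is sigma-finite
  haveI hσν : SigmaFinite ν :=
    sigmaFinite_of_pot_lt_top hαn (lt_of_le_of_lt (hpot x₀) hx₀)
  -- key estimate
  have key : ∀ k, ∫⁻ x, rieszPotential n α (γ k) x ∂ν ≤ μ Set.univ := by
    intro k
    haveI := hσγ k
    calc ∫⁻ x, rieszPotential n α (γ k) x ∂ν
        = ∫⁻ y, rieszPotential n α ν y ∂(γ k) := swap ν (γ k) inferInstance inferInstance
      _ ≤ ∫⁻ y, rieszPotential n α μ y ∂(γ k) := lintegral_mono fun y => hpot y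
      _ = ∫⁻ x, rieszPotential n α (γ k) x ∂μ := swap (γ k) μ inferInstance inferInstance
      _ ≤ ∫⁻ _, 1 ∂μ := lintegral_mono fun x => hle1 k x
      _ = μ Set.univ := lintegral_one
  -- conclude by monotone convergence
  have hsup : ∀ x, (⨆ k, rieszPotential n α (γ k) x) = 1 := fun x =>
    tendsto_nhds_unique (tendsto_atTop_iSup (hγpot x)) (hγlim x)
  calc ν Set.univ = ∫⁻ _, 1 ∂ν := lintegral_one.symm
    _ = ∫⁻ x, ⨆ k, rieszPotential n α (γ k) x ∂ν :=
        lintegral_congr fun x => (hsup x).symm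
    _ = ⨆ k, ∫⁻ x, rieszPotential n α (γ k) x ∂ν := by
        refine lintegral_iSup (fun k => ?_) (fun i j hij x => hγpot x hij)
        haveI := hσγ k
        exact Measurable.lintegral_prod_right' kernel_measurable
    _ ≤ μ Set.univ := iSup_le key
end
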